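/- For all nonzero a and natural numbers k ≤ n, the (s,t)-fibonomial coefficient satisfies {n choose k}_{as,a²t} = a^{k(n−k)} · {n choose k}_{s,t}. -/
import Mathlib


variable {K : Type*} [Field K]

def genFib (s t : K) : ℕ → K
  | 0 => 0
  | 1 => 1
  | n + 2 => s * genFib s t (n + 1) + t * genFib s t n

def fibtorial (s t : K) (n : ℕ) : K := ∏ j ∈ Finset.range n, genFib s t (j + 1)

/-- The (s,t)-fibonomial coefficient {n choose k}. -/
def fibonomial (s t : K) (n k : ℕ) : K :=
  fibtorial s t n / (fibtorial s t k * fibtorial s t (n - k))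

lemma genFib_rescale (s t a : K) : ∀ m, genFib (a * s) (a ^ 2 * t) m = a ^ (m - 1) * genFib s t m
  | 0 => by simp [genFib]
  | 1 => by simp [genFib]
  | (m + 2) => by
    rw [genFib, genFib, genFib_rescale s t a (m + 1), genFib_rescale s t a m]
    rw [show m + 2 - 1 = m + 1 from rfl, show m + 1 - 1 = m from rfl]
    cases m with
    | zero => simp [genFib]
    | succ m' =>
      simp only [Nat.add_sub_cancel]
      ring

lemma sum_range_add (k m : ℕ) :
    ∑ i ∈ Finset.range (k + m), i = (∑ i ∈ Finset.range k, i) + (∑ i ∈ Finset.range m, i) + k * m := by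
  induction m with
  | zero => simp
  | succ m ih =>
    rw [show k + (m + 1) = (k + m) + 1 from rfl, Finset.sum_range_succ, Finset.sum_range_succ, ih]
    ring

lemma fibtorial_rescale (s t a : K) (n : ℕ) :
    fibtorial (a * s) (a ^ 2 * t) n = a ^ (∑ i ∈ Finset.range n, i) * fibtorial s t n := by
  unfold fibtorial
  rw [← Finset.prod_pow_eq_pow_sum, ← Finset.prod_mul_distrib]
  exact Finset.prod_congr rfl fun j _ => by rw [genFib_rescale]; simp

theorem fibonomial_rescale (s t a : K) (ha : a ≠ 0) (n k : ℕ) (hk : k ≤ n)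
    (hnz : ∀ m, 1 ≤ m → m ≤ n → genFib s t m ≠ 0) :
    fibonomial (a * s) (a ^ 2 * t) n k = a ^ (k * (n - k)) * fibonomial s t n k := by
  have hft : ∀ m, m ≤ n → fibtorial s t m ≠ 0 := fun m hm => by
    refine Finset.prod_ne_zero_iff.mpr fun j hj => ?_
    exact hnz (j + 1) (Nat.le_add_left 1 j) (le_trans (Finset.mem_range.mp hj) hm)
  have hsum : ∑ i ∈ Finset.range n, i =
      (∑ i ∈ Finset.range k, i) + (∑ i ∈ Finset.range (n - k), i) + k * (n - k) := by
    conv_lhs => rw [show n = k + (n - k) from (Nat.add_sub_cancel' hk).symm]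
    exact sum_range_add k (n - k)
  unfold fibonomial
  rw [fibtorial_rescale, fibtorial_rescale, fibtorial_rescale, hsum]
  have h1 := hft k hk
  have h2 := hft (n - k) (Nat.sub_le n k)
  field_simp
  ring
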